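/- arXiv:1504.04821 — 4 statements merged into one kernel-verified Lean document; each statement's English description precedes it below -/
import Mathlib

section
/- If H is an α-expander for some α > 0, then the treewidth of H satisfies tw(H) ≥ (α/(3(1+α)))·|V(H)| − 1. -/
namespace Paper

/-- A separator of a graph `G`: a pair `(A,B)` of vertex sets covering `V(G)` with no
edge between `A \ B` and `B \ A`. -/
def IsSeparator {V : Type*} (G : SimpleGraph V) (A B : Set V) : Prop :=
  A ∪ B = Set.univ ∧ ∀ a ∈ A \ B, ∀ b ∈ B \ A, ¬ G.Adj a b

/-- The order of a separator `(A,B)` is `|A ∩ B|`. -/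
noncomputable def sepOrder {V : Type*} (A B : Set V) : ℕ := Nat.card ↥(A ∩ B)

/-- A balanced separator: both `|A \ B|` and `|B \ A|` are at most `2|V(G)|/3`. -/
def IsBalancedSeparator {V : Type*} (G : SimpleGraph V) (A B : Set V) : Prop :=
  IsSeparator G A B ∧ 3 * Nat.card ↥(A \ B) ≤ 2 * Nat.card V ∧
    3 * Nat.card ↥(B \ A) ≤ 2 * Nat.card V

/-- `G` is an `α`-expander: every set `A` with `|A| ≤ |V|/2` has at least `α|A|`
outside neighbours. -/
def IsExpander {V : Type*} (G : SimpleGraph V) (α : ℝ) : Prop :=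
  ∀ A : Set V, 2 * Nat.card ↥A ≤ Nat.card V →
    α * (Nat.card ↥A : ℝ) ≤ (Nat.card ↥{v | v ∉ A ∧ ∃ a ∈ A, G.Adj v a} : ℝ)

/-- A tree decomposition of `G` with bags `β` indexed by the vertices of a tree `T`. -/
def IsTreeDecomp {V ι : Type*} (G : SimpleGraph V) (T : SimpleGraph ι) (β : ι → Set V) : Prop :=
  T.IsTree ∧ (∀ v : V, ∃ i, v ∈ β i) ∧
    (∀ u v : V, G.Adj u v → ∃ i, u ∈ β i ∧ v ∈ β i) ∧
    (∀ v : V, (T.induce {i | v ∈ β i}).Connected)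

/-- The treewidth of `G`: the least `k` admitting a tree decomposition with bags of
size at most `k + 1`. -/
noncomputable def treewidth {V : Type*} (G : SimpleGraph V) : ℕ :=
  sInf {k | ∃ (ι : Type) (T : SimpleGraph ι) (β : ι → Set V),
    Finite ι ∧ IsTreeDecomp G T β ∧ ∀ i, Nat.card ↥(β i) ≤ k + 1}

/-- `H` is a minor of `G`: branch sets are nonempty, connected, pairwise disjoint,
and adjacency of `H` is realized by edges of `G` between branch sets. -/
def IsMinor {W V : Type*} (H : SimpleGraph W) (G : SimpleGraph V) : Prop :=
  ∃ φ : W → Set V, (∀ w, (φ w).Nonempty) ∧ (∀ w, (G.induce (φ w)).Connected) ∧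
    (Pairwise fun w w' => Disjoint (φ w) (φ w')) ∧
    ∀ w w', H.Adj w w' → ∃ a ∈ φ w, ∃ b ∈ φ w', G.Adj a b

/-- `H` is an `r`-minor of `G`: a minor all of whose branch sets have radius at most `r`. -/
def IsRMinor {W V : Type*} (r : ℕ) (H : SimpleGraph W) (G : SimpleGraph V) : Prop :=
  ∃ φ : W → Set V, (∀ w, (φ w).Nonempty) ∧ (∀ w, (G.induce (φ w)).Connected) ∧
    (∀ w, ∃ u : φ w, ∀ v : φ w, (G.induce (φ w)).dist u v ≤ r) ∧
    (Pairwise fun w w' => Disjoint (φ w) (φ w')) ∧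
    ∀ w w', H.Adj w w' → ∃ a ∈ φ w, ∃ b ∈ φ w', G.Adj a b

/-- Every subgraph `H` of `G` (on `n` vertices) has a balanced separator of order at
most `c · n ^ β`. -/
def HasSmallSeparators {V : Type*} (G : SimpleGraph V) (c β : ℝ) : Prop :=
  ∀ (s : Set V) (H : SimpleGraph s), H ≤ G.induce s →
    ∃ A B : Set s, IsBalancedSeparator H A B ∧
      (sepOrder A B : ℝ) ≤ c * (Nat.card ↥s : ℝ) ^ β


lemma partition_card {V : Type*} [Finite V] (A B : Set V) (h : A ∪ B = Set.univ) :
    Nat.card ↥(A \ B) + Nat.card ↥(B \ A) + Nat.card ↥(A ∩ B) = Nat.card V := by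
  simp only [Nat.card_coe_set_eq]
  have h1 := Set.ncard_inter_add_ncard_diff_eq_ncard A B
  have h2 := Set.ncard_inter_add_ncard_diff_eq_ncard B A
  have h3 := Set.ncard_union_add_ncard_inter A B
  rw [h, Set.inter_comm B A] at *
  have : (Set.univ : Set V).ncard = Nat.card V := Set.ncard_univ V
  omega

lemma key {V : Type*} [Finite V] (H : SimpleGraph V) (α : ℝ) (hα : 0 < α)
    (hexp : IsExpander H α) (A B : Set V) (hS : IsSeparator H A B)
    (hbal : 3 * Nat.card ↥(B \ A) ≤ 2 * Nat.card V)
    (hle : Nat.card ↥(A \ B) ≤ Nat.card ↥(B \ A)) (k : ℕ)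
    (hk : Nat.card ↥(A ∩ B) ≤ k + 1) :
    α * (Nat.card V : ℝ) ≤ 3 * (1 + α) * (k + 1) := by
  have hcard := partition_card A B hS.1
  have hsmall : 2 * Nat.card ↥(A \ B) ≤ Nat.card V := by omega
  have hN := hexp (A \ B) hsmall
  have hsub : {v | v ∉ A \ B ∧ ∃ a ∈ A \ B, H.Adj v a} ⊆ A ∩ B := by
    intro v ⟨hv1, a, ha, hadj⟩
    have hvu : v ∈ A ∪ B := by rw [hS.1]; trivial
    have hvBA : v ∉ B \ A := fun hv2 => hS.2 a ha v hv2 hadj.symm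
    rcases hvu with hv | hv
    · exact ⟨hv, by by_contra hB; exact hv1 ⟨hv, hB⟩⟩
    · exact ⟨by by_contra hA; exact hvBA ⟨hv, hA⟩, hv⟩
  have hNle : Nat.card ↥{v | v ∉ A \ B ∧ ∃ a ∈ A \ B, H.Adj v a} ≤ Nat.card ↥(A ∩ B) := by
    simpa only [Nat.card_coe_set_eq] using Set.ncard_le_ncard hsub (Set.toFinite _)
  have h1 : Nat.card V ≤ 3 * Nat.card ↥(A \ B) + 3 * Nat.card ↥(A ∩ B) := by omega
  have h1' : (Nat.card V : ℝ) ≤ 3 * (Nat.card ↥(A \ B) : ℝ) + 3 * (Nat.card ↥(A ∩ B) : ℝ) := by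
    exact_mod_cast h1
  have hs' : ((Nat.card ↥(A ∩ B) : ℝ)) ≤ (k : ℝ) + 1 := by exact_mod_cast hk
  have hN' : α * (Nat.card ↥(A \ B) : ℝ) ≤ (Nat.card ↥(A ∩ B) : ℝ) :=
    hN.trans ((Nat.cast_le (α := ℝ)).mpr hNle)
  nlinarith [mul_le_mul_of_nonneg_left h1' hα.le, hα.le,
    (Nat.cast_nonneg (Nat.card ↥(A ∩ B)) : (0:ℝ) ≤ _)]

/-- If `H` is an `α`-expander for some `α > 0`, then
`tw(H) ≥ (α/(3(1+α)))·|V(H)| − 1`.  (The standard fact that every graph has a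
balanced separator of order at most `tw + 1` is assumed as a hypothesis.) -/
theorem expander_treewidth_lower_bound {V : Type*} [Finite V] (H : SimpleGraph V)
    (α : ℝ) (hα : 0 < α) (hexp : IsExpander H α)
    (hsep : ∃ A B : Set V, IsBalancedSeparator H A B ∧ sepOrder A B ≤ treewidth H + 1) :
    (treewidth H : ℝ) ≥ α / (3 * (1 + α)) * (Nat.card V : ℝ) - 1 := by
  obtain ⟨A, B, ⟨hS, hbA, hbB⟩, hk⟩ := hsep
  unfold sepOrder at hk
  have hmain : α * (Nat.card V : ℝ) ≤ 3 * (1 + α) * (treewidth H + 1) := by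
    rcases le_total (Nat.card ↥(A \ B)) (Nat.card ↥(B \ A)) with hle | hle
    · exact key H α hα hexp A B hS hbB hle _ hk
    · refine key H α hα hexp B A ?_ hbA hle _ (by rwa [Set.inter_comm])
      exact ⟨by rw [Set.union_comm]; exact hS.1,
        fun b hb a ha hadj => hS.2 a ha b hb hadj.symm⟩
  have h3 : (0:ℝ) < 3 * (1 + α) := by positivity
  rw [ge_iff_le, sub_le_iff_le_add, div_mul_eq_mul_div, div_le_iff₀ h3]
  nlinarith

end Paper
end

section
/- For every real n ≥ 3, with h(x) = x/(2·log(e·x)), one has h(n/3) + h(2n/3) − h(n) ≥ n/(4·(log(e·n))²). -/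
namespace Paper

/- Writing `L = log (e n)`, one has `log (e n / 3) = L - log 3` and `log (2 e n / 3) = L - log (3/2)`,
so the left-hand side equals `(n/6) ((L - log 3)⁻¹ - L⁻¹) + (n/3) ((L - log (3/2))⁻¹ - L⁻¹)`.
Each difference `(L - a)⁻¹ - L⁻¹ = a / ((L - a) L)` is at least `a / L²`, and
`log 3 + 2 log (3/2) = log (27/4) ≥ 3/2`. -/

lemma div_sq_le_inv_sub_inv {a L : ℝ} (ha : 0 ≤ a) (haL : a < L) :
    a / L ^ 2 ≤ (L - a)⁻¹ - L⁻¹ := by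
  have hL : 0 < L := ha.trans_lt haL
  have hLa : 0 < L - a := sub_pos.2 haL
  rw [inv_sub_inv hLa.ne' hL.ne', sub_sub_cancel, sq]
  exact div_le_div_of_nonneg_left ha (mul_pos hLa hL) (by nlinarith)

lemma three_halves_le_log_three_add_two_mul_log_three_halves :
    3 / 2 ≤ Real.log 3 + 2 * Real.log (3 / 2) := by
  rw [Real.log_div (by norm_num) (by norm_num)]
  linarith [Real.log_three_gt_d9, Real.log_two_lt_d9]

lemma le_shifted_inv_gain {n L a b : ℝ} (hn : 0 ≤ n) (ha : 0 ≤ a) (hb : 0 ≤ b)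
    (haL : a < L) (hbL : b < L) (hab : 3 / 2 ≤ a + 2 * b) :
    n / (4 * L ^ 2) ≤ (n / 3) / (2 * (L - a)) + (2 * n / 3) / (2 * (L - b)) - n / (2 * L) := by
  have hLa : L - a ≠ 0 := (sub_pos.2 haL).ne'
  have hLb : L - b ≠ 0 := (sub_pos.2 hbL).ne'
  calc n / (4 * L ^ 2) = n / 6 * (3 / 2 / L ^ 2) := by ring
    _ ≤ n / 6 * ((a + 2 * b) / L ^ 2) := by gcongr
    _ = n / 6 * (a / L ^ 2) + n / 3 * (b / L ^ 2) := by ring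
    _ ≤ n / 6 * ((L - a)⁻¹ - L⁻¹) + n / 3 * ((L - b)⁻¹ - L⁻¹) := by
      gcongr
      · exact div_sq_le_inv_sub_inv ha haL
      · exact div_sq_le_inv_sub_inv hb hbL
    _ = (n / 3) / (2 * (L - a)) + (2 * n / 3) / (2 * (L - b)) - n / (2 * L) := by
      field_simp
      ring

/-- For every real `n ≥ 3`, with `h(x) = x/(2·log(e·x))`, one has
`h(n/3) + h(2n/3) − h(n) ≥ n/(4·(log(e·n))²)`. -/
theorem h_superadditivity_gain (n : ℝ) (hn : 3 ≤ n) :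
    (n / 3) / (2 * Real.log (Real.exp 1 * (n / 3)))
      + (2 * n / 3) / (2 * Real.log (Real.exp 1 * (2 * n / 3)))
      - n / (2 * Real.log (Real.exp 1 * n))
      ≥ n / (4 * (Real.log (Real.exp 1 * n)) ^ 2) := by
  have hn0 : 0 < n := by linarith
  set L := Real.log (Real.exp 1 * n) with hL
  have hlog_div : ∀ c : ℝ, 0 < c → Real.log (Real.exp 1 * (n / c)) = L - Real.log c :=
    fun c hc => by rw [← mul_div_assoc, Real.log_div (by positivity) hc.ne']
  have hlog_two_thirds : Real.log (Real.exp 1 * (2 * n / 3)) = L - Real.log (3 / 2) := by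
    rw [show 2 * n / 3 = n / (3 / 2) by ring, hlog_div _ (by norm_num)]
  have hlog3 : Real.log 3 < L := by
    rw [hL, Real.log_mul (Real.exp_ne_zero 1) hn0.ne', Real.log_exp]
    linarith [Real.log_le_log (by norm_num) hn]
  have hlog32 : Real.log (3 / 2) < Real.log 3 := Real.log_lt_log (by norm_num) (by norm_num)
  rw [hlog_div 3 (by norm_num), hlog_two_thirds]
  exact le_shifted_inv_gain hn0.le (Real.log_nonneg (by norm_num)) (Real.log_nonneg (by norm_num))
    hlog3 (hlog32.trans hlog3) three_halves_le_log_three_add_two_mul_log_three_halves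

end Paper
end

section
/- Let c ≥ 1 and 0 < δ ≤ 1, and let a = a_δ(c) ≥ 1 be the real number with a^δ = 4c·(log(e·a))². If every subgraph H of a graph G has a balanced separator of order at most c·|V(H)|^{1−δ}, then G has at most a·|V(G)| edges. -/
namespace Paper

/-- edges of `G` with both ends in `T` -/
def EdgIn {V : Type*} (G : SimpleGraph V) (T : Set V) : Set (Sym2 V) :=
  {e | e ∈ G.edgeSet ∧ ∀ v ∈ e, v ∈ T}

lemma edgIn_univ {V : Type*} (G : SimpleGraph V) : EdgIn G Set.univ = G.edgeSet := by
  ext e; simp [EdgIn]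

lemma edgIn_subset_range {V : Type*} (G : SimpleGraph V) (T : Set V) :
    EdgIn G T ⊆ Set.range (Sym2.map ((↑) : T → V)) := by
  rintro e ⟨he, hT⟩
  obtain ⟨u, v, rfl⟩ : ∃ u v, e = s(u, v) := by
    induction e using Sym2.ind with
    | _ x y => exact ⟨x, y, rfl⟩
  refine ⟨s(⟨u, hT u (Sym2.mem_iff.mpr (Or.inl rfl))⟩,
          ⟨v, hT v (Sym2.mem_iff.mpr (Or.inr rfl))⟩), rfl⟩

lemma edg_le_real {V : Type*} [Finite V] (G : SimpleGraph V) (T : Set V) :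
    ((EdgIn G T).ncard : ℝ) ≤ (T.ncard : ℝ) * ((T.ncard : ℝ) + 1) / 2 := by
  classical
  haveI : Fintype ↥T := Fintype.ofFinite _
  have h1 : (EdgIn G T).ncard ≤ Nat.card (Sym2 ↥T) := by
    calc (EdgIn G T).ncard
        ≤ (Set.range (Sym2.map ((↑) : T → V))).ncard :=
          Set.ncard_le_ncard (edgIn_subset_range G T) (Set.toFinite _)
      _ = ((Sym2.map ((↑) : T → V)) '' Set.univ).ncard := by rw [Set.image_univ]
      _ ≤ (Set.univ : Set (Sym2 ↥T)).ncard := Set.ncard_image_le (Set.toFinite _)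
      _ = Nat.card (Sym2 ↥T) := Set.ncard_univ _
  have h2 : Nat.card (Sym2 ↥T) = Nat.choose (T.ncard + 1) 2 := by
    rw [Nat.card_eq_fintype_card, Sym2.card]
    congr 2
    rw [← Nat.card_coe_set_eq, Nat.card_eq_fintype_card]
  have h3 : (EdgIn G T).ncard ≤ Nat.choose (T.ncard + 1) 2 := h2 ▸ h1
  calc ((EdgIn G T).ncard : ℝ) ≤ ((Nat.choose (T.ncard + 1) 2 : ℕ) : ℝ) := by exact_mod_cast h3
    _ = ((T.ncard : ℝ) + 1) * (((T.ncard : ℝ) + 1) - 1) / 2 := by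
        rw [Nat.cast_choose_two]; push_cast; ring
    _ = (T.ncard : ℝ) * ((T.ncard : ℝ) + 1) / 2 := by ring

lemma edgIn_split {V : Type*} (G : SimpleGraph V) (T : Set V) (A B : Set ↥T)
    (hcov : A ∪ B = Set.univ)
    (hns : ∀ a ∈ A \ B, ∀ b ∈ B \ A, ¬ (G.induce T).Adj a b) :
    EdgIn G T ⊆ EdgIn G ((↑) '' A) ∪ EdgIn G ((↑) '' B) := by
  rintro e ⟨he, hT⟩
  obtain ⟨u, v, rfl⟩ : ∃ u v, e = s(u, v) := by
    induction e using Sym2.ind with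
    | _ x y => exact ⟨x, y, rfl⟩
  have hu : u ∈ T := hT u (Sym2.mem_iff.mpr (Or.inl rfl))
  have hv : v ∈ T := hT v (Sym2.mem_iff.mpr (Or.inr rfl))
  have hadj : G.Adj u v := he
  set u' : ↥T := ⟨u, hu⟩ with hu'
  set v' : ↥T := ⟨v, hv⟩ with hv'
  have hindAdj : (G.induce T).Adj u' v' := by
    simp only [SimpleGraph.comap_adj, Function.Embedding.coe_subtype]
    exact hadj
  have huAB : u' ∈ A ∪ B := hcov ▸ Set.mem_univ u'
  have hvAB : v' ∈ A ∪ B := hcov ▸ Set.mem_univ v'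
  have mem_of : ∀ S : Set ↥T, u' ∈ S → v' ∈ S → s(u, v) ∈ EdgIn G ((↑) '' S) := by
    intro S h1 h2
    refine ⟨he, ?_⟩
    intro w hw
    rcases Sym2.mem_iff.mp hw with rfl | rfl
    · exact ⟨u', h1, rfl⟩
    · exact ⟨v', h2, rfl⟩
  rcases huAB with huA | huB
  · rcases hvAB with hvA | hvB
    · exact Or.inl (mem_of A huA hvA)
    · by_cases hvA : v' ∈ A
      · exact Or.inl (mem_of A huA hvA)
      · by_cases huB : u' ∈ B
        · exact Or.inr (mem_of B huB hvB)
        · exact absurd hindAdj (hns u' ⟨huA, huB⟩ v' ⟨hvB, hvA⟩)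
  · rcases hvAB with hvA | hvB
    · by_cases huA : u' ∈ A
      · exact Or.inl (mem_of A huA hvA)
      · by_cases hvB : v' ∈ B
        · exact Or.inr (mem_of B huB hvB)
        · exact absurd hindAdj.symm (hns v' ⟨hvA, hvB⟩ u' ⟨huB, huA⟩)
    · exact Or.inr (mem_of B huB hvB)


lemma consts (c δ a : ℝ) (hc : 1 ≤ c) (hδ0 : 0 < δ) (hδ1 : δ ≤ 1) (ha : 1 ≤ a)
    (haeq : a ^ δ = 4 * c * (Real.log (Real.exp 1 * a)) ^ 2) :
    64 ≤ a ∧ 64 * c ≤ δ * a ^ δ := by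
  have ha0 : (0:ℝ) < a := by linarith
  set L := 1 + Real.log a with hLdef
  have hlogea : Real.log (Real.exp 1 * a) = L := by
    rw [Real.log_mul (Real.exp_ne_zero 1) (by linarith), Real.log_exp]
  rw [hlogea] at haeq
  have hL1 : 1 ≤ L := by have := Real.log_nonneg ha; simp only [hLdef]; linarith
  have hL0 : (0:ℝ) < L := by linarith
  have hlog : δ * Real.log a = Real.log (4 * c) + 2 * Real.log L := by
    have h1 : Real.log (a ^ δ) = δ * Real.log a := Real.log_rpow ha0 δ
    rw [haeq, Real.log_mul (by positivity) (by positivity), Real.log_pow] at h1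
    push_cast at h1
    linarith
  have hlog4 : (1.386:ℝ) ≤ Real.log (4 * c) := by
    have h4 : Real.log 4 ≤ Real.log (4 * c) := Real.log_le_log (by norm_num) (by linarith)
    have h4e : Real.log 4 = 2 * Real.log 2 := by
      rw [show (4:ℝ) = 2 ^ (2:ℕ) by norm_num, Real.log_pow]; push_cast; ring
    linarith [Real.log_two_gt_d9]
  have hLa : δ * (L - 1) = δ * Real.log a := by rw [hLdef]; ring
  have hstep1 : (1.386:ℝ) ≤ δ * (L - 1) := by
    rw [hLa, hlog]; linarith [Real.log_nonneg hL1]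
  have hL2 : (2.386:ℝ) ≤ L := by
    have h := mul_le_mul_of_nonneg_right hδ1 (by linarith : (0:ℝ) ≤ L - 1)
    nlinarith
  have hlogL2 : (0.693:ℝ) ≤ Real.log L := by
    have h := Real.log_le_log (by norm_num : (0:ℝ) < 2) (by linarith : (2:ℝ) ≤ L)
    linarith [Real.log_two_gt_d9]
  have hstep2 : (2.772:ℝ) ≤ δ * (L - 1) := by rw [hLa, hlog]; linarith
  have hL3 : (3.772:ℝ) ≤ L := by
    have h := mul_le_mul_of_nonneg_right hδ1 (by linarith : (0:ℝ) ≤ L - 1)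
    nlinarith
  have hlogL3 : (1:ℝ) ≤ Real.log L := by
    rw [Real.le_log_iff_exp_le hL0]
    have := Real.exp_one_lt_d9
    linarith
  have hstep3 : (3.386:ℝ) ≤ δ * (L - 1) := by rw [hLa, hlog]; linarith
  have hL4 : (3.386:ℝ) ≤ L - 1 := by
    have h := mul_le_mul_of_nonneg_right hδ1 (by linarith : (0:ℝ) ≤ L - 1)
    nlinarith
  have h16 : (16:ℝ) ≤ δ * L ^ 2 := by
    have hprod : (3.386:ℝ) * 3.386 ≤ (δ * (L - 1)) * (L - 1) :=
      mul_le_mul hstep3 hL4 (by norm_num) (by nlinarith)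
    nlinarith
  have hkey : 64 * c ≤ δ * a ^ δ := by
    rw [haeq]
    nlinarith [mul_le_mul_of_nonneg_left h16 (by linarith : (0:ℝ) ≤ c)]
  refine ⟨?_, hkey⟩
  have h1 : a ^ δ ≤ a := by
    calc a ^ δ ≤ a ^ (1:ℝ) := Real.rpow_le_rpow_of_exponent_le ha hδ1
      _ = a := Real.rpow_one a
  have h2 : δ * a ^ δ ≤ a ^ δ := by
    have hn : (0:ℝ) ≤ a ^ δ := Real.rpow_nonneg (le_of_lt ha0) δ
    have := mul_le_mul_of_nonneg_right hδ1 hn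
    linarith
  linarith

lemma leaf_real (c δ a t m : ℝ) (hc : 1 ≤ c) (hδ0 : 0 < δ) (hδ1 : δ ≤ 1)
    (ha64 : 64 ≤ a) (hkey : 64 * c ≤ δ * a ^ δ)
    (ht3 : a / 3 < t) (hta : t ≤ a) (hm : m ≤ t * (t + 1) / 2) (hm0 : 0 ≤ m) :
    δ * m ≤ δ * a * t - 8 * a * c * t ^ (1 - δ) := by
  have ht0 : (0:ℝ) < t := by linarith
  have ha0 : (0:ℝ) < a := by linarith
  have hc0 : (0:ℝ) < c := by linarith
  set u := t ^ δ with hu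
  set w := t ^ (1 - δ) with hw
  have hwu : w * u = t := by
    rw [hw, hu, ← Real.rpow_add ht0]
    norm_num
  have hu0 : (0:ℝ) < u := Real.rpow_pos_of_pos ht0 δ
  have hw0 : (0:ℝ) ≤ w := Real.rpow_nonneg (le_of_lt ht0) _
  -- a^δ ≤ 3 * u
  have hu3 : a ^ δ ≤ 3 * u := by
    have h1 : (a / 3) ^ δ ≤ u := Real.rpow_le_rpow (by positivity) (le_of_lt ht3) (le_of_lt hδ0)
    have h2 : (a / 3) ^ δ = a ^ δ / 3 ^ δ := Real.div_rpow (le_of_lt ha0) (by norm_num : (0:ℝ) ≤ 3) δ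
    have h3 : (3:ℝ) ^ δ ≤ 3 := by
      calc (3:ℝ) ^ δ ≤ (3:ℝ) ^ (1:ℝ) := Real.rpow_le_rpow_of_exponent_le (by norm_num) hδ1
        _ = 3 := Real.rpow_one 3
    have h4 : (0:ℝ) < (3:ℝ) ^ δ := Real.rpow_pos_of_pos (by norm_num) δ
    have h5 : a ^ δ / 3 ≤ a ^ δ / 3 ^ δ := by
      apply div_le_div_of_nonneg_left (Real.rpow_nonneg (le_of_lt ha0) δ) h4 h3
    linarith [h1, h2 ▸ h5]
  -- 8*a*c*w ≤ (3/8)*(δ*a*t)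
  have hδu : 64 * c ≤ 3 * (δ * u) := by
    have := mul_le_mul_of_nonneg_left hu3 (le_of_lt hδ0)
    linarith [hkey]
  have hterm : 8 * a * c * w ≤ (3/8) * (δ * a * t) := by
    have h6 : 8 * c ≤ (3/8) * (δ * u) := by linarith
    have h7 : (8 * c) * (a * w) ≤ ((3/8) * (δ * u)) * (a * w) :=
      mul_le_mul_of_nonneg_right h6 (by positivity)
    calc 8 * a * c * w = (8 * c) * (a * w) := by ring
      _ ≤ ((3/8) * (δ * u)) * (a * w) := h7
      _ = (3/8) * (δ * a * (w * u)) := by ring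
      _ = (3/8) * (δ * a * t) := by rw [hwu]
  -- δ * m ≤ (65/128) * (δ * a * t)
  have hmm : δ * m ≤ (65/128) * (δ * a * t) := by
    have h8 : t + 1 ≤ (65/64) * a := by linarith
    have h9 : m ≤ (65/128) * (a * t) := by
      have h8' : t * (t + 1) ≤ t * ((65/64) * a) := mul_le_mul_of_nonneg_left h8 (le_of_lt ht0)
      nlinarith
    calc δ * m ≤ δ * ((65/128) * (a * t)) := mul_le_mul_of_nonneg_left h9 (le_of_lt hδ0)
      _ = (65/128) * (δ * a * t) := by ring
  have hat0 : 0 ≤ δ * a * t := by positivity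
  linarith

lemma step_real (c δ a t s a' b' m mA mB : ℝ) (hc : 1 ≤ c) (hδ0 : 0 < δ) (hδ1 : δ ≤ 1)
    (ha64 : 64 ≤ a) (hkey : 64 * c ≤ δ * a ^ δ)
    (hta : a < t) (hs : s ≤ c * t ^ (1 - δ)) (hs0 : 0 ≤ s)
    (hab : a' + b' = t + s)
    (haL : t ≤ 3 * a') (hbL : t ≤ 3 * b')
    (haU : 3 * a' ≤ 2 * t + 3 * s) (hbU : 3 * b' ≤ 2 * t + 3 * s)
    (hmA : δ * mA ≤ δ * a * a' - 8 * a * c * a' ^ (1 - δ))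
    (hmB : δ * mB ≤ δ * a * b' - 8 * a * c * b' ^ (1 - δ))
    (hm : m ≤ mA + mB) :
    δ * m ≤ δ * a * t - 8 * a * c * t ^ (1 - δ) := by
  have ha0 : (0:ℝ) < a := by linarith
  have ht0 : (0:ℝ) < t := by linarith
  have hc0 : (0:ℝ) < c := by linarith
  set u := t ^ δ with hu
  set w := t ^ (1 - δ) with hw
  have hwu : w * u = t := by
    rw [hw, hu, ← Real.rpow_add ht0]; norm_num
  have hu0 : (0:ℝ) < u := Real.rpow_pos_of_pos ht0 δ
  have hw0 : (0:ℝ) ≤ w := Real.rpow_nonneg (le_of_lt ht0) _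
  have hu64 : 64 * c ≤ u := by
    have h1 : a ^ δ ≤ u := Real.rpow_le_rpow (le_of_lt ha0) (le_of_lt hta) (le_of_lt hδ0)
    have h2 : δ * a ^ δ ≤ a ^ δ := by
      have hn : (0:ℝ) ≤ a ^ δ := Real.rpow_nonneg (le_of_lt ha0) δ
      have := mul_le_mul_of_nonneg_right hδ1 hn
      linarith
    linarith
  have hs12 : 12 * s ≤ t := by
    have h1 : 12 * s ≤ 12 * (c * w) := by linarith [mul_le_mul_of_nonneg_left hs (by norm_num : (0:ℝ) ≤ 12)]
    have h2 : 12 * c * w ≤ u * w := mul_le_mul_of_nonneg_right (by linarith) hw0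
    have h3 : u * w = t := by rw [mul_comm]; exact hwu
    linarith
  have ha'U : a' ≤ (3/4) * t := by linarith
  have hb'U : b' ≤ (3/4) * t := by linarith
  have ha'0 : (0:ℝ) < a' := by linarith
  have hb'0 : (0:ℝ) < b' := by linarith
  -- a' ≤ a'^(1-δ) * ((3/4)*t)^δ
  have key : ∀ x : ℝ, 0 < x → x ≤ (3/4) * t → x ≤ x ^ (1 - δ) * ((3/4) * t) ^ δ := by
    intro x hx0 hxU
    have e1 : x = x ^ (1 - δ) * x ^ δ := by
      rw [← Real.rpow_add hx0]; norm_num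
    have e2 : x ^ δ ≤ ((3/4) * t) ^ δ := Real.rpow_le_rpow (le_of_lt hx0) hxU (le_of_lt hδ0)
    calc x = x ^ (1 - δ) * x ^ δ := e1
      _ ≤ x ^ (1 - δ) * ((3/4) * t) ^ δ :=
          mul_le_mul_of_nonneg_left e2 (Real.rpow_nonneg (le_of_lt hx0) _)
  set S := a' ^ (1 - δ) + b' ^ (1 - δ) with hS
  have hS0 : 0 ≤ S := by
    have := Real.rpow_nonneg (le_of_lt ha'0) (1 - δ)
    have := Real.rpow_nonneg (le_of_lt hb'0) (1 - δ)
    simp only [hS]; linarith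
  have hsum : t ≤ S * ((3/4) * t) ^ δ := by
    have h1 := key a' ha'0 ha'U
    have h2 := key b' hb'0 hb'U
    have h3 : a' + b' ≤ S * ((3/4) * t) ^ δ := by
      calc a' + b' ≤ a' ^ (1-δ) * ((3/4) * t) ^ δ + b' ^ (1-δ) * ((3/4) * t) ^ δ := by linarith
        _ = S * ((3/4) * t) ^ δ := by rw [hS]; ring
    linarith
  set q := ((3:ℝ)/4) ^ δ with hq
  have hq0 : (0:ℝ) < q := Real.rpow_pos_of_pos (by norm_num) δ
  have hP : ((3/4) * t) ^ δ = q * u := Real.mul_rpow (by norm_num) (le_of_lt ht0)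
  -- (1 + δ/4) * q ≤ 1
  have hinv : (1 + δ/4) * q ≤ 1 := by
    have h1 : (1 + δ/4) ≤ ((4:ℝ)/3) ^ δ := by
      rw [Real.rpow_def_of_pos (by norm_num : (0:ℝ) < 4/3)]
      have hl : (1:ℝ)/4 ≤ Real.log (4/3) := by
        have := Real.one_sub_inv_le_log_of_pos (by norm_num : (0:ℝ) < 4/3)
        norm_num at this
        linarith
      have h2 : δ/4 ≤ Real.log (4/3) * δ := by nlinarith
      linarith [Real.add_one_le_exp (Real.log (4/3) * δ)]
    have h3 : ((4:ℝ)/3) ^ δ * q = 1 := by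
      rw [hq, ← Real.mul_rpow (by norm_num) (by norm_num)]
      norm_num
    have h4 := mul_le_mul_of_nonneg_right h1 (le_of_lt hq0)
    linarith
  -- S ≥ (1 + δ/4) * w
  have hSw : (1 + δ/4) * w ≤ S := by
    have h1 : w * u ≤ (S * q) * u := by
      rw [hwu]
      calc t ≤ S * ((3/4) * t) ^ δ := hsum
        _ = (S * q) * u := by rw [hP]; ring
    have h2 : w ≤ S * q := le_of_mul_le_mul_right h1 hu0
    have h3 : (1 + δ/4) * w ≤ (1 + δ/4) * (S * q) :=
      mul_le_mul_of_nonneg_left h2 (by linarith)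
    have h4 : (1 + δ/4) * (S * q) = S * ((1 + δ/4) * q) := by ring
    have h5 : S * ((1 + δ/4) * q) ≤ S * 1 := mul_le_mul_of_nonneg_left hinv hS0
    linarith
  -- assemble
  have e1 : δ * a * a' + δ * a * b' = δ * a * t + δ * a * s := by
    have : δ * a * (a' + b') = δ * a * (t + s) := by rw [hab]
    linarith [this]
  have e2 : δ * a * s ≤ 2 * a * c * (δ * w) := by
    have h1 : δ * a * s ≤ δ * a * (c * w) :=
      mul_le_mul_of_nonneg_left hs (by positivity)
    have h2 : (0:ℝ) ≤ a * c * (δ * w) :=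
      mul_nonneg (mul_nonneg (le_of_lt ha0) (le_of_lt hc0)) (mul_nonneg (le_of_lt hδ0) hw0)
    have h3 : δ * a * (c * w) = a * c * (δ * w) := by ring
    linarith
  have e3 : 8 * a * c * ((1 + δ/4) * w) ≤ 8 * a * c * S :=
    mul_le_mul_of_nonneg_left hSw (by positivity)
  have e4 : 8 * a * c * a' ^ (1-δ) + 8 * a * c * b' ^ (1-δ) = 8 * a * c * S := by
    rw [hS]; ring
  have e5 : 8 * a * c * ((1 + δ/4) * w) = 8 * a * c * w + 2 * a * c * (δ * w) := by ring
  have hδm : δ * m ≤ δ * mA + δ * mB := by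
    have := mul_le_mul_of_nonneg_left hm (le_of_lt hδ0)
    linarith
  linarith


set_option maxHeartbeats 1000000 in
lemma edg_claim {V : Type*} [Finite V] (G : SimpleGraph V) (c δ a : ℝ)
    (hc : 1 ≤ c) (hδ0 : 0 < δ) (hδ1 : δ ≤ 1) (ha64 : 64 ≤ a) (hkey : 64 * c ≤ δ * a ^ δ)
    (hsep : HasSmallSeparators G c (1 - δ)) :
    ∀ n : ℕ, ∀ T : Set V, T.ncard = n → a / 3 < (T.ncard : ℝ) →
      δ * ((EdgIn G T).ncard : ℝ) ≤ δ * a * (T.ncard : ℝ)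
        - 8 * a * c * ((T.ncard : ℝ)) ^ (1 - δ) := by
  intro n
  induction n using Nat.strong_induction_on with
  | _ n IH =>
    intro T hTn hT3
    by_cases hta : ((T.ncard : ℝ)) ≤ a
    · exact leaf_real c δ a _ _ hc hδ0 hδ1 ha64 hkey hT3 hta (edg_le_real G T)
        (Nat.cast_nonneg _)
    · push_neg at hta
      obtain ⟨A, B, hbal, hord⟩ := hsep T (G.induce T) le_rfl
      obtain ⟨⟨hcov, hns⟩, hbalA, hbalB⟩ := hbal
      have hTcard : Nat.card ↥T = T.ncard := Nat.card_coe_set_eq T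
      have hsop : sepOrder A B = (A ∩ B).ncard := Nat.card_coe_set_eq _
      rw [Nat.card_coe_set_eq, hTcard] at hbalA hbalB
      rw [hsop, hTcard] at hord
      -- ℕ facts
      have f1 : A.ncard + B.ncard = T.ncard + (A ∩ B).ncard := by
        have h := Set.ncard_union_add_ncard_inter A B (Set.toFinite _) (Set.toFinite _)
        rw [hcov, Set.ncard_univ, hTcard] at h
        omega
      have f2 : (A \ B).ncard + (A ∩ B).ncard = A.ncard := by
        have h := Set.ncard_diff_add_ncard_of_subset
          (Set.inter_subset_left : A ∩ B ⊆ A) (Set.toFinite _)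
        rwa [Set.diff_self_inter] at h
      have f3 : A.ncard + (B \ A).ncard = T.ncard := by
        have h := Set.ncard_union_eq (Set.disjoint_sdiff_right : Disjoint A (B \ A))
          (Set.toFinite _) (Set.toFinite _)
        rw [Set.union_diff_self, hcov, Set.ncard_univ, hTcard] at h
        omega
      have f4 : B.ncard + (A \ B).ncard = T.ncard := by
        have h := Set.ncard_union_eq (Set.disjoint_sdiff_right : Disjoint B (A \ B))
          (Set.toFinite _) (Set.toFinite _)
        rw [Set.union_diff_self, Set.union_comm B A, hcov, Set.ncard_univ, hTcard] at h
        omega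
      have g1 : T.ncard ≤ 3 * A.ncard := by omega
      have g2 : T.ncard ≤ 3 * B.ncard := by omega
      have g3 : 3 * A.ncard ≤ 2 * T.ncard + 3 * (A ∩ B).ncard := by omega
      have g4 : 3 * B.ncard ≤ 2 * T.ncard + 3 * (A ∩ B).ncard := by omega
      -- real casts
      have habR : (A.ncard : ℝ) + (B.ncard : ℝ) = (T.ncard : ℝ) + ((A ∩ B).ncard : ℝ) := by
        exact_mod_cast f1
      have haLR : (T.ncard : ℝ) ≤ 3 * (A.ncard : ℝ) := by exact_mod_cast g1
      have hbLR : (T.ncard : ℝ) ≤ 3 * (B.ncard : ℝ) := by exact_mod_cast g2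
      have haUR : 3 * (A.ncard : ℝ) ≤ 2 * (T.ncard : ℝ) + 3 * ((A ∩ B).ncard : ℝ) := by
        exact_mod_cast g3
      have hbUR : 3 * (B.ncard : ℝ) ≤ 2 * (T.ncard : ℝ) + 3 * ((A ∩ B).ncard : ℝ) := by
        exact_mod_cast g4
      have ht0 : (0:ℝ) < (T.ncard : ℝ) := by linarith
      -- s ≤ t/12
      have hs12 : 12 * ((A ∩ B).ncard : ℝ) ≤ (T.ncard : ℝ) := by
        set t := ((T.ncard : ℝ)) with htt
        have hu1 : a ^ δ ≤ t ^ δ :=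
          Real.rpow_le_rpow (by linarith) (le_of_lt hta) (le_of_lt hδ0)
        have hu2 : δ * a ^ δ ≤ a ^ δ := by
          have hn : (0:ℝ) ≤ a ^ δ := Real.rpow_nonneg (by linarith) δ
          have := mul_le_mul_of_nonneg_right hδ1 hn
          linarith
        have hwu : t ^ (1-δ) * t ^ δ = t := by
          rw [← Real.rpow_add ht0]; norm_num
        have hw0 : (0:ℝ) ≤ t ^ (1-δ) := Real.rpow_nonneg (le_of_lt ht0) _
        have h1 : 12 * c * t ^ (1-δ) ≤ t ^ δ * t ^ (1-δ) :=
          mul_le_mul_of_nonneg_right (by linarith) hw0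
        have h3 : t ^ δ * t ^ (1-δ) = t := by rw [mul_comm]; exact hwu
        have := mul_le_mul_of_nonneg_left hord (by norm_num : (0:ℝ) ≤ 12)
        linarith
      have haltR : (A.ncard : ℝ) < (T.ncard : ℝ) := by linarith
      have hbltR : (B.ncard : ℝ) < (T.ncard : ℝ) := by linarith
      have halt : A.ncard < n := by rw [← hTn]; exact_mod_cast haltR
      have hblt : B.ncard < n := by rw [← hTn]; exact_mod_cast hbltR
      -- images
      have hAcard : (((↑) '' A : Set V)).ncard = A.ncard :=
        Set.ncard_image_of_injective A Subtype.val_injective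
      have hBcard : (((↑) '' B : Set V)).ncard = B.ncard :=
        Set.ncard_image_of_injective B Subtype.val_injective
      have IHA := IH A.ncard halt ((↑) '' A) hAcard (by rw [hAcard]; linarith)
      have IHB := IH B.ncard hblt ((↑) '' B) hBcard (by rw [hBcard]; linarith)
      rw [hAcard] at IHA
      rw [hBcard] at IHB
      -- edge split
      have hmsplit : (EdgIn G T).ncard ≤
          (EdgIn G ((↑) '' A)).ncard + (EdgIn G ((↑) '' B)).ncard :=
        le_trans (Set.ncard_le_ncard (edgIn_split G T A B hcov hns) (Set.toFinite _))
          (Set.ncard_union_le _ _)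
      have hmR : ((EdgIn G T).ncard : ℝ) ≤
          ((EdgIn G ((↑) '' A)).ncard : ℝ) + ((EdgIn G ((↑) '' B)).ncard : ℝ) := by
        exact_mod_cast hmsplit
      exact step_real _ _ _ _ _ _ _ _ _ _
        hc hδ0 hδ1 ha64 hkey hta hord (Nat.cast_nonneg _) habR haLR hbLR haUR hbUR
        IHA IHB hmR


/-- If `a ≥ 1` satisfies `a ^ δ = 4c·(log(e·a))²` and every subgraph `H`
of `G` has a balanced separator of order at most `c·|V(H)|^{1−δ}`, then `G` has at
most `a·|V(G)|` edges. -/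
theorem edge_density_bound {V : Type*} [Finite V] (G : SimpleGraph V) (c δ a : ℝ)
    (hc : 1 ≤ c) (hδ0 : 0 < δ) (hδ1 : δ ≤ 1) (ha : 1 ≤ a)
    (haeq : a ^ δ = 4 * c * (Real.log (Real.exp 1 * a)) ^ 2)
    (hsep : HasSmallSeparators G c (1 - δ)) :
    (Nat.card ↥G.edgeSet : ℝ) ≤ a * (Nat.card V : ℝ) := by
  obtain ⟨ha64, hkey⟩ := consts c δ a hc hδ0 hδ1 ha haeq
  have hedge : (Nat.card ↥G.edgeSet : ℝ) = ((EdgIn G (Set.univ : Set V)).ncard : ℝ) := by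
    rw [edgIn_univ]
    exact_mod_cast Nat.card_coe_set_eq G.edgeSet
  have hncard : (Nat.card V : ℝ) = (((Set.univ : Set V)).ncard : ℝ) := by
    rw [Set.ncard_univ]
  rw [hedge, hncard]
  by_cases hcase : (((Set.univ : Set V)).ncard : ℝ) ≤ a
  · have h1 := edg_le_real G (Set.univ : Set V)
    have hn0 : (0:ℝ) ≤ (((Set.univ : Set V)).ncard : ℝ) := Nat.cast_nonneg _
    have h2 : (((Set.univ : Set V)).ncard : ℝ) * ((((Set.univ : Set V)).ncard : ℝ) + 1)
        ≤ (((Set.univ : Set V)).ncard : ℝ) * (2 * a) :=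
      mul_le_mul_of_nonneg_left (by linarith) hn0
    linarith
  · push_neg at hcase
    have hclaim := edg_claim G c δ a hc hδ0 hδ1 ha64 hkey hsep
      ((Set.univ : Set V).ncard) (Set.univ) rfl (by linarith)
    have h2 : (0:ℝ) ≤ 8 * a * c * (((Set.univ : Set V)).ncard : ℝ) ^ (1 - δ) := by
      have := Real.rpow_nonneg (Nat.cast_nonneg ((Set.univ : Set V).ncard) : (0:ℝ) ≤ _) (1 - δ)
      have ha0 : (0:ℝ) ≤ a := by linarith
      have hc0 : (0:ℝ) ≤ c := by linarith
      positivity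
    have h3 : δ * ((EdgIn G (Set.univ : Set V)).ncard : ℝ)
        ≤ δ * (a * (((Set.univ : Set V)).ncard : ℝ)) := by linarith
    exact le_of_mul_le_mul_left h3 hδ0


end Paper
end

section
/- Let c ≥ 1, 0 < δ ≤ 1, and a = a_δ(c) with a^δ = 4c·log²(ea). If every subgraph H of G has a balanced separator of order at most c|V(H)|^{1−δ}, then |E(G)| ≤ a·(|V(G)| − h(|V(G)|)), where h(n) = n/(2 log(en)). -/
namespace Paper

open Real

/-! Write `deficit x = x / (2 log (e x))` (the paper's `h`) and `L = log (e m)`. By induction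
on `m = |S|`, at most `a (m - deficit m)` edges of `G` lie inside `S`. For `m ≤ a` this is the
trivial bound `m² / 2`. Otherwise the choice of `a` gives `4 c log² (e m) ≤ m ^ δ`, so a balanced
separator of `G[S]` has order `t ≤ m / (4 L²)`; its sides have sizes `x + y = m + t`, and it
suffices that `deficit m + t ≤ deficit x + deficit y`. The tangent line of `u ↦ 1/u` at `L`
gives `deficit x ≥ x / (2L) + m (-p log p) / (2L²)` with `p = x / m ∈ [1/3, 17/25]`, where
`-p log p ≥ 1/4`; the two gains `m / (8L²)` pay for `t`. -/

lemma log_exp_one_mul {x : ℝ} (hx : x ≠ 0) : log (exp 1 * x) = 1 + log x := by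
  rw [log_mul (exp_ne_zero 1) hx, log_exp]

lemma sub_add_sq_div_two_le_neg_log {p : ℝ} (hp0 : 0 < p) (hp1 : p ≤ 1) :
    (1 - p) + (1 - p) ^ 2 / 2 ≤ -log p := by
  have hx : |1 - p| < 1 := by rw [abs_lt]; constructor <;> linarith
  have hsum := hasSum_pow_div_log_of_abs_lt_one hx
  rw [sub_sub_cancel] at hsum
  have := sum_le_hasSum (Finset.range 2) (fun i _ => by positivity) hsum
  norm_num [Finset.sum_range_succ] at this
  linarith

lemma one_quarter_le_negMulLog {p : ℝ} (hp : 1 / 3 ≤ p) (hp' : p ≤ 17 / 25) :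
    1 / 4 ≤ negMulLog p := by
  have hlog := sub_add_sq_div_two_le_neg_log (by linarith) (by linarith : p ≤ 1)
  rw [negMulLog, neg_mul, ← mul_neg]
  nlinarith [mul_le_mul_of_nonneg_left hlog (by linarith : (0:ℝ) ≤ p),
    mul_nonneg (sub_nonneg.2 hp) (sub_nonneg.2 hp')]

lemma two_mul_sub_div_sq_le_inv {u L : ℝ} (hu : 0 < u) : (2 * L - u) / L ^ 2 ≤ u⁻¹ := by
  rcases eq_or_ne L 0 with rfl | hL
  · simp [hu.le]
  rw [div_le_iff₀ (by positivity), ← div_eq_inv_mul, le_div_iff₀ hu]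
  nlinarith [sq_nonneg (L - u)]

noncomputable def deficit (x : ℝ) : ℝ := x / (2 * log (exp 1 * x))

lemma deficit_natCast_le_half (n : ℕ) : deficit n ≤ n / 2 := by
  rcases Nat.eq_zero_or_pos n with rfl | hn
  · simp [deficit]
  have hn1 : (1 : ℝ) ≤ n := by exact_mod_cast hn
  have hL : 1 ≤ log (exp 1 * n) := by
    rw [log_exp_one_mul (by positivity)]; linarith [log_nonneg hn1]
  exact div_le_div_of_nonneg_left (by positivity) (by norm_num) (by linarith)

lemma choose_two_le_mul_sub_deficit {a : ℝ} {n : ℕ} (hn : (n : ℝ) ≤ a) :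
    (n.choose 2 : ℝ) ≤ a * (n - deficit n) := by
  have := deficit_natCast_le_half n
  rw [Nat.cast_choose_two]
  nlinarith [n.cast_nonneg (α := ℝ)]

lemma div_add_le_deficit {m z : ℝ} (hm : 3 ≤ m) (hz : m / 3 ≤ z) (hz' : z ≤ 17 / 25 * m) :
    z / (2 * log (exp 1 * m)) + m / (8 * log (exp 1 * m) ^ 2) ≤ deficit z := by
  have hm0 : 0 < m := by linarith
  have hz0 : 0 < z := by linarith
  have hLm := log_exp_one_mul hm0.ne'
  have hLz := log_exp_one_mul hz0.ne'
  have hlogz : 0 ≤ log z := log_nonneg (by linarith)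
  have hzm : log z ≤ log m := log_le_log hz0 (by linarith)
  have hgap : m / 4 ≤ z * (log m - log z) := by
    have hp := one_quarter_le_negMulLog (p := z / m) (by rw [le_div_iff₀ hm0]; linarith)
      (by rw [div_le_iff₀ hm0]; linarith)
    rw [negMulLog, log_div hz0.ne' hm0.ne'] at hp
    have : z * (log m - log z) = m * (-(z / m) * (log z - log m)) := by field_simp; ring
    rw [this]; nlinarith
  have htangent := mul_le_mul_of_nonneg_left
    (two_mul_sub_div_sq_le_inv (L := 1 + log m) (by linarith : 0 < 1 + log z))
    (by positivity : 0 ≤ z / 2)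
  rw [deficit, hLm, hLz]
  calc z / (2 * (1 + log m)) + m / (8 * (1 + log m) ^ 2)
      ≤ z / (2 * (1 + log m)) + z * (log m - log z) / (2 * (1 + log m) ^ 2) := by
        rw [show m / (8 * (1 + log m) ^ 2) = m / 4 / (2 * (1 + log m) ^ 2) by
          rw [div_div]; ring_nf]
        exact add_le_add_right (div_le_div_of_nonneg_right hgap (by positivity)) _
    _ = z / 2 * ((2 * (1 + log m) - (1 + log z)) / (1 + log m) ^ 2) := by field_simp; ring
    _ ≤ z / 2 * (1 + log z)⁻¹ := htangent
    _ = z / (2 * (1 + log z)) := by field_simp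

lemma deficit_add_le_deficit_add_deficit {m t x y : ℝ} (hm : 3 ≤ m)
    (hL : 5 ≤ log (exp 1 * m)) (ht0 : 0 ≤ t) (ht : t ≤ m / (4 * log (exp 1 * m) ^ 2))
    (hxy : x + y = m + t) (hx : x ≤ 2 * m / 3 + t) (hy : y ≤ 2 * m / 3 + t) :
    deficit m + t ≤ deficit x + deficit y := by
  set L := log (exp 1 * m)
  have ht100 : t ≤ m / 100 :=
    ht.trans (div_le_div_of_nonneg_left (by linarith) (by norm_num) (by nlinarith))
  have hdx := div_add_le_deficit hm (by linarith) (by linarith : x ≤ 17 / 25 * m)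
  have hdy := div_add_le_deficit hm (by linarith) (by linarith : y ≤ 17 / 25 * m)
  have hsplit : x / (2 * L) + y / (2 * L) = m / (2 * L) + t / (2 * L) := by
    rw [← add_div, hxy, add_div]
  have hquarter : m / (8 * L ^ 2) + m / (8 * L ^ 2) = m / (4 * L ^ 2) := by
    field_simp; ring
  have : 0 ≤ t / (2 * L) := by positivity
  rw [deficit]
  linarith

lemma four_le_log_of_sq_le {a : ℝ} (ha : 1 ≤ a) (h : 4 * (1 + log a) ^ 2 ≤ a) : 4 ≤ log a := by
  have hlog_le : ∀ b : ℝ, 0 < b → b ≤ 4 * (1 + log a) ^ 2 → log b ≤ log a :=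
    fun b hb hba => log_le_log hb (hba.trans h)
  have hlog0 := log_nonneg ha
  have hlog2 := log_two_gt_d9
  have hlog4 : 2 * log 2 ≤ log a := by
    rw [← log_rpow two_pos]; norm_num
    exact hlog_le 4 (by norm_num) (by nlinarith)
  have hlog16 : 4 * log 2 ≤ log a := by
    rw [← log_rpow two_pos]; norm_num
    exact hlog_le 16 (by norm_num) (by nlinarith)
  have hexp4 : exp 4 < 56 := by
    have h4 : exp 4 = exp 1 ^ 4 := by rw [← exp_nat_mul]; norm_num
    rw [h4]
    calc exp 1 ^ 4 < 2.7182818286 ^ 4 := by gcongr; exact exp_one_lt_d9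
      _ < 56 := by norm_num
  calc (4 : ℝ) = log (exp 4) := (log_exp 4).symm
    _ ≤ log 56 := log_le_log (exp_pos 4) hexp4.le
    _ ≤ log a := hlog_le 56 (by norm_num) (by nlinarith)

lemma sq_log_exp_one_mul_mul_rpow_le {a m δ : ℝ} (ha : 0 < a) (hδ : 0 ≤ δ)
    (hδa : 2 ≤ δ * log (exp 1 * a)) (ham : a ≤ m) :
    log (exp 1 * m) ^ 2 * a ^ δ ≤ log (exp 1 * a) ^ 2 * m ^ δ := by
  have hm : 0 < m := ha.trans_le ham
  set u := log m - log a with hu_def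
  have hu : 0 ≤ u := sub_nonneg.2 (log_le_log ha ham)
  have hLa : 0 < log (exp 1 * a) := by nlinarith
  have hLm : log (exp 1 * m) = log (exp 1 * a) + u := by
    rw [log_exp_one_mul hm.ne', log_exp_one_mul ha.ne']; ring
  have hrpow : m ^ δ = a ^ δ * exp (δ * u) := by
    rw [rpow_def_of_pos hm, rpow_def_of_pos ha, ← exp_add, hu_def]; ring_nf
  have hexp : (1 + δ * u / 2) ^ 2 ≤ exp (δ * u) := by
    calc (1 + δ * u / 2) ^ 2 ≤ exp (δ * u / 2) ^ 2 := by
          gcongr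
          linarith [add_one_le_exp (δ * u / 2)]
      _ = exp (δ * u) := by rw [sq, ← exp_add]; ring_nf
  have hlin : log (exp 1 * m) ≤ log (exp 1 * a) * (1 + δ * u / 2) := by
    rw [hLm]; nlinarith
  rw [hrpow]
  have : 0 ≤ log (exp 1 * m) := by rw [hLm]; linarith
  calc log (exp 1 * m) ^ 2 * a ^ δ
      ≤ (log (exp 1 * a) * (1 + δ * u / 2)) ^ 2 * a ^ δ := by gcongr
    _ = log (exp 1 * a) ^ 2 * (1 + δ * u / 2) ^ 2 * a ^ δ := by ring
    _ ≤ log (exp 1 * a) ^ 2 * exp (δ * u) * a ^ δ := by gcongr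
    _ = log (exp 1 * a) ^ 2 * (a ^ δ * exp (δ * u)) := by ring

lemma four_le_log_of_rpow_eq {a c δ : ℝ} (hc : 1 ≤ c) (hδ1 : δ ≤ 1) (ha : 1 ≤ a)
    (haeq : a ^ δ = 4 * c * log (exp 1 * a) ^ 2) : 4 ≤ log a := by
  apply four_le_log_of_sq_le ha
  calc 4 * (1 + log a) ^ 2 ≤ 4 * c * log (exp 1 * a) ^ 2 := by
        rw [log_exp_one_mul (by positivity)]; nlinarith [sq_nonneg (1 + log a)]
    _ = a ^ δ := haeq.symm
    _ ≤ a := by simpa using rpow_le_rpow_of_exponent_le ha hδ1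

lemma mul_rpow_one_sub_le_of_rpow_eq {a c δ m : ℝ} (hc : 1 ≤ c) (hδ0 : 0 < δ) (ha : 0 < a)
    (hLa : 2 ≤ log (exp 1 * a)) (haeq : a ^ δ = 4 * c * log (exp 1 * a) ^ 2) (ham : a ≤ m) :
    c * m ^ (1 - δ) ≤ m / (4 * log (exp 1 * m) ^ 2) := by
  have hm : 0 < m := ha.trans_le ham
  have hδa : 2 ≤ δ * log (exp 1 * a) := by
    have h16 : log 16 ≤ δ * log a := by
      rw [← log_rpow ha]; exact log_le_log (by norm_num) (by rw [haeq]; nlinarith)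
    have : log 16 = 4 * log 2 := by rw [← log_rpow two_pos]; norm_num
    rw [log_exp_one_mul ha.ne']
    linarith [log_two_gt_d9]
  have hmono := sq_log_exp_one_mul_mul_rpow_le ha hδ0.le hδa ham
  rw [haeq] at hmono
  have hLa0 : 0 < log (exp 1 * a) ^ 2 := by positivity
  have hLm : 4 * c * log (exp 1 * m) ^ 2 ≤ m ^ δ := by nlinarith
  have hLm0 : 0 < log (exp 1 * m) ^ 2 := by
    have hLam := log_le_log (by positivity) (mul_le_mul_of_nonneg_left ham (exp_pos 1).le)
    have : 0 < log (exp 1 * m) := by linarith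
    positivity
  rw [rpow_sub hm, rpow_one, le_div_iff₀ (by positivity)]
  calc c * (m / m ^ δ) * (4 * log (exp 1 * m) ^ 2)
        = m * (4 * c * log (exp 1 * m) ^ 2) / m ^ δ := by ring
    _ ≤ m * m ^ δ / m ^ δ := by gcongr
    _ = m := by field_simp

lemma ncard_edgeSet_inter_sym2_le_choose_two {V : Type*} [Finite V] (G : SimpleGraph V)
    (s : Set V) :
    (G.edgeSet ∩ s.sym2).ncard ≤ s.ncard.choose 2 := by
  classical
  have := Fintype.ofFinite V
  have hcoe : G.edgeSet ∩ s.sym2 = ↑(G.edgeFinset ∩ s.toFinset.sym2) := by simp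
  rw [hcoe, Set.ncard_coe_finset, ← SimpleGraph.map_edgeFinset_induce, Finset.card_map,
    Set.ncard_eq_toFinset_card', Set.toFinset_card]
  convert SimpleGraph.card_edgeFinset_le_card_choose_two

lemma IsSeparator.edgeSet_inter_sym2_subset {V : Type*} {G : SimpleGraph V} {s : Set V}
    {A B : Set s} (h : IsSeparator (G.induce s) A B) :
    G.edgeSet ∩ s.sym2 ⊆
      G.edgeSet ∩ (Subtype.val '' A).sym2 ∪ G.edgeSet ∩ (Subtype.val '' B).sym2 := by
  obtain ⟨hAB, hsep⟩ := h
  rintro ⟨u, v⟩ ⟨huv, hu, hv⟩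
  set u' : s := ⟨u, hu⟩
  set v' : s := ⟨v, hv⟩
  have hadj : (G.induce s).Adj u' v' := huv
  have hu' : u' ∈ A ∪ B := hAB ▸ Set.mem_univ _
  have hv' : v' ∈ A ∪ B := hAB ▸ Set.mem_univ _
  have hmem (C : Set s) (huC : u' ∈ C) (hvC : v' ∈ C) : s(u, v) ∈ (Subtype.val '' C).sym2 :=
    ⟨⟨_, huC, rfl⟩, ⟨_, hvC, rfl⟩⟩
  by_cases hA : u' ∈ A ∧ v' ∈ A
  · exact .inl ⟨huv, hmem A hA.1 hA.2⟩
  by_cases hB : u' ∈ B ∧ v' ∈ B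
  · exact .inr ⟨huv, hmem B hB.1 hB.2⟩
  exfalso
  rcases hu' with huA | huB <;> rcases hv' with hvA | hvB
  · exact hA ⟨huA, hvA⟩
  · exact hsep _ ⟨huA, fun huB => hB ⟨huB, hvB⟩⟩ _ ⟨hvB, fun hvA => hA ⟨huA, hvA⟩⟩ hadj
  · exact hsep _ ⟨hvA, fun hvB => hB ⟨huB, hvB⟩⟩ _ ⟨huB, fun huA => hA ⟨huA, hvA⟩⟩ hadj.symm
  · exact hB ⟨huB, hvB⟩

lemma IsSeparator.ncard_add_ncard {W : Type*} [Finite W] {G : SimpleGraph W} {A B : Set W}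
    (h : IsSeparator G A B) : A.ncard + B.ncard = Nat.card W + sepOrder A B := by
  rw [sepOrder, Nat.card_coe_set_eq, ← Set.ncard_union_add_ncard_inter, h.1, Set.ncard_univ]

lemma IsBalancedSeparator.three_mul_ncard_left_le {W : Type*} [Finite W] {G : SimpleGraph W}
    {A B : Set W} (h : IsBalancedSeparator G A B) :
    3 * A.ncard ≤ 2 * Nat.card W + 3 * sepOrder A B := by
  have hbal := h.2.1
  rw [Nat.card_coe_set_eq] at hbal
  rw [sepOrder, Nat.card_coe_set_eq, ← Set.ncard_inter_add_ncard_sdiff_eq_ncard A B]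
  omega

lemma IsBalancedSeparator.three_mul_ncard_right_le {W : Type*} [Finite W] {G : SimpleGraph W}
    {A B : Set W} (h : IsBalancedSeparator G A B) :
    3 * B.ncard ≤ 2 * Nat.card W + 3 * sepOrder A B := by
  have hbal := h.2.2
  rw [Nat.card_coe_set_eq] at hbal
  rw [sepOrder, Nat.card_coe_set_eq, Set.inter_comm,
    ← Set.ncard_inter_add_ncard_sdiff_eq_ncard B A]
  omega

lemma HasSmallSeparators.exists_split {V : Type*} [Finite V] {G : SimpleGraph V} {c β : ℝ}
    (hsep : HasSmallSeparators G c β) (s : Set V) :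
    ∃ A B : Set V, G.edgeSet ∩ s.sym2 ⊆ G.edgeSet ∩ A.sym2 ∪ G.edgeSet ∩ B.sym2 ∧
      ∃ t : ℕ, A.ncard + B.ncard = s.ncard + t ∧ 3 * A.ncard ≤ 2 * s.ncard + 3 * t ∧
        3 * B.ncard ≤ 2 * s.ncard + 3 * t ∧ (t : ℝ) ≤ c * (s.ncard : ℝ) ^ β := by
  obtain ⟨A, B, hAB, ht⟩ := hsep s (G.induce s) le_rfl
  have hcard (C : Set s) : (Subtype.val '' C).ncard = C.ncard :=
    Set.ncard_image_of_injective C Subtype.val_injective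
  rw [Nat.card_coe_set_eq] at ht
  refine ⟨_, _, hAB.1.edgeSet_inter_sym2_subset, sepOrder A B, ?_, ?_, ?_, ht⟩ <;>
    simp only [hcard, ← Nat.card_coe_set_eq s]
  · exact hAB.1.ncard_add_ncard
  · exact hAB.three_mul_ncard_left_le
  · exact hAB.three_mul_ncard_right_le

theorem ncard_edgeSet_inter_sym2_le_mul_sub_deficit {V : Type*} [Finite V] {G : SimpleGraph V}
    {a c δ : ℝ} (ha : 3 ≤ a) (hLa : 5 ≤ log (exp 1 * a))
    (hord : ∀ m : ℝ, a ≤ m → c * m ^ (1 - δ) ≤ m / (4 * log (exp 1 * m) ^ 2))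
    (hsep : HasSmallSeparators G c (1 - δ)) (s : Set V) :
    ((G.edgeSet ∩ s.sym2).ncard : ℝ) ≤ a * (s.ncard - deficit s.ncard) := by
  obtain ⟨m, hm⟩ : ∃ m, s.ncard = m := ⟨_, rfl⟩
  induction m using Nat.strong_induction_on generalizing s with
  | _ m ih =>
  rw [hm]
  rcases le_or_gt (m : ℝ) a with hma | hma
  · exact (Nat.cast_le.2 (hm ▸ ncard_edgeSet_inter_sym2_le_choose_two G s)).trans
      (choose_two_le_mul_sub_deficit hma)
  obtain ⟨A, B, hsub, t, hsum, hA, hB, ht⟩ := hsep.exists_split s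
  rw [hm] at hsum hA hB ht
  have hL : 5 ≤ log (exp 1 * m) := hLa.trans (log_le_log (by positivity) (by gcongr))
  replace ht := ht.trans (hord m hma.le)
  have htm : 3 * t < m := by
    have hm0 : (0 : ℝ) < m := by linarith
    have : (m : ℝ) / (4 * log (exp 1 * m) ^ 2) < m / 3 :=
      div_lt_div_of_pos_left hm0 (by norm_num) (by nlinarith)
    exact_mod_cast (by linarith : (3 * t : ℝ) < m)
  have hE : ((G.edgeSet ∩ s.sym2).ncard : ℝ) ≤
      (G.edgeSet ∩ A.sym2).ncard + (G.edgeSet ∩ B.sym2).ncard := by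
    exact_mod_cast (Set.ncard_le_ncard hsub).trans (Set.ncard_union_le _ _)
  have hEA := ih A.ncard (by omega) A rfl
  have hEB := ih B.ncard (by omega) B rfl
  have hA' : (3 * A.ncard : ℝ) ≤ 2 * m + 3 * t := by exact_mod_cast hA
  have hB' : (3 * B.ncard : ℝ) ≤ 2 * m + 3 * t := by exact_mod_cast hB
  have hdef := deficit_add_le_deficit_add_deficit (x := A.ncard) (y := B.ncard)
    (by linarith) hL t.cast_nonneg ht (by exact_mod_cast hsum) (by linarith) (by linarith)
  have hsum' : (A.ncard : ℝ) + B.ncard = m + t := by exact_mod_cast hsum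
  calc ((G.edgeSet ∩ s.sym2).ncard : ℝ)
      ≤ a * (A.ncard - deficit A.ncard) + a * (B.ncard - deficit B.ncard) :=
        hE.trans (add_le_add hEA hEB)
    _ = a * ((A.ncard + B.ncard) - (deficit A.ncard + deficit B.ncard)) := by ring
    _ ≤ a * (m - deficit m) := by
        rw [hsum']; exact mul_le_mul_of_nonneg_left (by linarith) (by linarith)

/-- Strengthened inductive claim: with `a ^ δ = 4c·log²(ea)` and
`h(n) = n/(2 log(en))`, if every subgraph of `G` has a balanced separator of order
at most `c·n^{1−δ}`, then `|E(G)| ≤ a·(|V(G)| − h(|V(G)|))`. -/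
theorem edge_density_bound_strong {V : Type*} [Finite V] (G : SimpleGraph V)
    (c δ a : ℝ) (hc : 1 ≤ c) (hδ0 : 0 < δ) (hδ1 : δ ≤ 1) (ha : 1 ≤ a)
    (haeq : a ^ δ = 4 * c * (Real.log (Real.exp 1 * a)) ^ 2)
    (hsep : HasSmallSeparators G c (1 - δ)) :
    (Nat.card ↥G.edgeSet : ℝ) ≤
      a * ((Nat.card V : ℝ)
        - (Nat.card V : ℝ) / (2 * Real.log (Real.exp 1 * (Nat.card V : ℝ)))) := by
  have hlog := four_le_log_of_rpow_eq hc hδ1 ha haeq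
  have hLa : 5 ≤ log (exp 1 * a) := by rw [log_exp_one_mul (by positivity)]; linarith
  have ha3 : 3 ≤ a := by linarith [add_one_le_exp (log a), exp_log (by positivity : 0 < a)]
  have h := ncard_edgeSet_inter_sym2_le_mul_sub_deficit ha3 hLa
    (fun m ham => mul_rpow_one_sub_le_of_rpow_eq hc hδ0 (by positivity) (by linarith) haeq ham)
    hsep Set.univ
  rwa [Set.sym2_univ, Set.inter_univ, Set.ncard_univ, ← Nat.card_coe_set_eq] at h

end Paper
end
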